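/- arXiv:1911.01153 — 3 statements merged into one kernel-verified Lean document; each statement's English description precedes it below -/
import Mathlib

section
/- Let m be a strictly positive integer, let u, u* ∈ {0,1}^m, and let a < b be indices in {1,…,m} such that: u_j = 0 for all a ≤ j < b, u_b = 1, u*_a = 1, u*_b = 0, and u*_j = u_j for all j ∉ {a,b} (that is, u* is obtained from u by moving the 1 in position b to an earlier position a, where u has no ones in positions a,…,b−1). Then Rel(C^{u*}; p) ≤ Rel(C^u; p) for all p ∈ [0,1]. -/
/-- Reliability of the elementary networks: `g false p = p²` (series),
`g true p = 1 - (1-p)²` (parallel). -/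
def g (b : Bool) (p : ℝ) : ℝ := if b then 1 - (1 - p)^2 else p^2

/-- Reliability polynomial of the composition `C^u`,
`Rel(C^u;p) = (g_{u_1} ∘ ⋯ ∘ g_{u_m})(p)`. -/
def RelC (m : ℕ) (u : Fin m → Bool) (p : ℝ) : ℝ :=
  (List.finRange m).foldr (fun i q => g (u i) q) p

/-- Support of a binary vector. -/
def supp (m : ℕ) (u : Fin m → Bool) : Finset (Fin m) :=
  Finset.univ.filter (fun i => u i = true)

/-- Rank function `ρ(u) = ∑_{i ∈ supp u} i`, with 1-based index values. -/
def rho (m : ℕ) (u : Fin m → Bool) : ℕ :=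
  ∑ i ∈ supp m u, ((i : ℕ) + 1)

/-- The support of `u`, sorted increasingly. -/
def sortedSupp (m : ℕ) (u : Fin m → Bool) : List (Fin m) :=
  Finset.sort (supp m u) (· ≤ ·)

/-- The order `≼_H`: same Hamming weight and `s_i ≤ t_i` for every `i`. -/
def relH (m : ℕ) (u v : Fin m → Bool) : Prop :=
  (supp m u).card = (supp m v).card ∧
    ∀ (i : ℕ) (hu : i < (sortedSupp m u).length) (hv : i < (sortedSupp m v).length),
      (sortedSupp m u).get ⟨i, hu⟩ ≤ (sortedSupp m v).get ⟨i, hv⟩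

/-- The order `≼_SH`. -/
def relSH (m : ℕ) (u v : Fin m → Bool) : Prop :=
  ((supp m u).card ≠ (supp m v).card ∧ supp m u ⊆ supp m v) ∨ relH m u v

/-- The partial order generated by `≼_SH` (reflexive–transitive closure). -/
def leSH (m : ℕ) (u v : Fin m → Bool) : Prop :=
  Relation.ReflTransGen (relSH m) u v

/-! Both compositions agree outside positions `a, …, b`, where `u` contributes the block
`g₀^(b-a) ∘ g₁` and `u*` the block `g₁ ∘ g₀^(b-a)`. Every `gᵢ` maps `[0,1]` monotonically into
itself, so it suffices to compare the two blocks, and by induction on `b - a` this reduces to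
`g₁ (g₀ q) ≤ g₀ (g₁ q)`, i.e. `(2q - q²)² - (2q² - q⁴) = 2q²(1-q)² ≥ 0`. -/

open Set

lemma mapsTo_g (b : Bool) : MapsTo (g b) (Icc 0 1) (Icc 0 1) := by
  rintro p ⟨hp0, hp1⟩
  cases b <;> simp only [g, if_true, Bool.false_eq_true, if_false] <;>
    constructor <;> nlinarith

lemma monotoneOn_g (b : Bool) : MonotoneOn (g b) (Icc 0 1) := by
  rintro p ⟨hp0, -⟩ q ⟨-, hq1⟩ hpq
  cases b <;> simp only [g, if_true, Bool.false_eq_true, if_false] <;> nlinarith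

lemma g_true_g_false_le (q : ℝ) : g true (g false q) ≤ g false (g true q) := by
  simp only [g, if_true, Bool.false_eq_true, if_false]
  nlinarith [sq_nonneg (q * (1 - q))]

lemma relC_eq_foldr_ofFn (m : ℕ) (u : Fin m → Bool) (p : ℝ) :
    RelC m u p = (List.ofFn u).foldr g p := by
  rw [RelC, List.ofFn_eq_map, List.foldr_map]

lemma mapsTo_foldr_g (l : List Bool) : MapsTo (l.foldr g ·) (Icc 0 1) (Icc 0 1) := by
  induction l with
  | nil => exact mapsTo_id _
  | cons b l ih => exact (mapsTo_g b).comp ih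

lemma monotoneOn_foldr_g (l : List Bool) : MonotoneOn (l.foldr g ·) (Icc 0 1) := by
  induction l with
  | nil => exact monotone_id.monotoneOn _
  | cons b l ih => exact (monotoneOn_g b).comp ih (mapsTo_foldr_g l)

lemma foldr_g_append_le {M M' : List Bool}
    (hM : ∀ q ∈ Icc (0 : ℝ) 1, M'.foldr g q ≤ M.foldr g q) (L R : List Bool)
    {p : ℝ} (hp : p ∈ Icc (0 : ℝ) 1) :
    (L ++ M' ++ R).foldr g p ≤ (L ++ M ++ R).foldr g p := by
  have hq := mapsTo_foldr_g R hp
  simp only [List.foldr_append]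
  exact monotoneOn_foldr_g L (mapsTo_foldr_g M' hq) (mapsTo_foldr_g M hq) (hM _ hq)

lemma g_true_foldr_replicate_false_le (n : ℕ) {q : ℝ} (hq : q ∈ Icc (0 : ℝ) 1) :
    g true ((List.replicate n false).foldr g q) ≤ (List.replicate n false).foldr g (g true q) := by
  induction n with
  | zero => rfl
  | succ n ih =>
    have hn := mapsTo_foldr_g (List.replicate n false) hq
    calc g true (g false ((List.replicate n false).foldr g q))
        ≤ g false (g true ((List.replicate n false).foldr g q)) := g_true_g_false_le _
      _ ≤ g false ((List.replicate n false).foldr g (g true q)) :=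
        monotoneOn_g false (mapsTo_g true hn) (mapsTo_foldr_g _ (mapsTo_g true hq)) ih

lemma ofFn_eq_take_append_zeros_one_append_drop {m : ℕ} (u : Fin m → Bool) {a b : Fin m}
    (hab : a < b) (hzero : ∀ j : Fin m, a ≤ j → j < b → u j = false) (hub : u b = true) :
    List.ofFn u = (List.ofFn u).take a ++ (List.replicate (b - a) false ++ [true]) ++
      (List.ofFn u).drop (b + 1) := by
  have hab' : (a : ℕ) < b := hab
  have hmin : min (a : ℕ) m = a := min_eq_left a.isLt.le
  apply List.ext_getElem (by
    simp only [List.length_ofFn, List.length_append, List.length_take, List.length_replicate,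
      List.length_singleton, List.length_drop, hmin]; omega)
  intro i _ _
  simp only [List.getElem_append, List.getElem_take, List.getElem_drop, List.getElem_ofFn,
    List.getElem_replicate, List.getElem_singleton, List.length_take, List.length_ofFn,
    List.length_append, List.length_replicate, List.length_singleton, hmin]
  split_ifs with h₁ h₂ h₃
  · rfl
  · exact hzero _ (show (a : ℕ) ≤ i by omega) (show i < (b : ℕ) by omega)
  · rwa [show (⟨i, _⟩ : Fin m) = b from Fin.ext (by simp only; omega)]
  · congr 2; omega

lemma ofFn_eq_take_append_one_zeros_append_drop {m : ℕ} (u ustar : Fin m → Bool) {a b : Fin m}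
    (hab : a < b) (hzero : ∀ j : Fin m, a ≤ j → j < b → u j = false)
    (hua : ustar a = true) (hubstar : ustar b = false)
    (hsame : ∀ j : Fin m, j ≠ a → j ≠ b → ustar j = u j) :
    List.ofFn ustar = (List.ofFn u).take a ++ (true :: List.replicate (b - a) false) ++
      (List.ofFn u).drop (b + 1) := by
  have hab' : (a : ℕ) < b := hab
  have hmin : min (a : ℕ) m = a := min_eq_left a.isLt.le
  apply List.ext_getElem (by
    simp only [List.length_ofFn, List.length_append, List.length_take, List.length_replicate,
      List.length_cons, List.length_drop, hmin]; omega)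
  intro i _ _
  simp only [List.getElem_append, List.getElem_take, List.getElem_drop, List.getElem_ofFn,
    List.getElem_replicate, List.getElem_cons, List.length_take, List.length_ofFn,
    List.length_append, List.length_replicate, List.length_cons, hmin]
  split_ifs with h₁ h₂ h₃
  · exact hsame _ (Fin.ne_of_val_ne (by simp only; omega)) (Fin.ne_of_val_ne (by simp only; omega))
  · rwa [show (⟨i, _⟩ : Fin m) = a from Fin.ext (by simp only; omega)]
  · by_cases hib : i = b
    · rwa [show (⟨i, _⟩ : Fin m) = b from Fin.ext hib]
    · rw [hsame _ (Fin.ne_of_val_ne (by simp only; omega)) (Fin.ne_of_val_ne hib)]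
      exact hzero _ (show (a : ℕ) ≤ i by omega) (show i < (b : ℕ) by omega)
  · rw [hsame _ (Fin.ne_of_val_ne (by simp only; omega)) (Fin.ne_of_val_ne (by simp only; omega))]
    congr 2; omega

theorem rel_le_of_move_one_left_general (m : ℕ) (u ustar : Fin m → Bool)
    (a b : Fin m) (hab : a < b)
    (hzero : ∀ j : Fin m, a ≤ j → j < b → u j = false)
    (hub : u b = true)
    (hua : ustar a = true) (hubstar : ustar b = false)
    (hsame : ∀ j : Fin m, j ≠ a → j ≠ b → ustar j = u j) :
    ∀ p ∈ Set.Icc (0:ℝ) 1, RelC m ustar p ≤ RelC m u p := by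
  intro p hp
  rw [relC_eq_foldr_ofFn, relC_eq_foldr_ofFn,
    ofFn_eq_take_append_zeros_one_append_drop u hab hzero hub,
    ofFn_eq_take_append_one_zeros_append_drop u ustar hab hzero hua hubstar hsame]
  refine foldr_g_append_le (fun q hq => ?_) _ _ hp
  simpa only [List.foldr_cons, List.foldr_append, List.foldr_nil]
    using g_true_foldr_replicate_false_le (b - a) hq

/-- moving a single `1` from position `b` to an earlier position `a`
(with no ones of `u` in positions `a, …, b-1`) decreases the reliability pointwise. -/
theorem rel_le_of_move_one_left (m : ℕ) (hm : 0 < m) (u ustar : Fin m → Bool)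
    (a b : Fin m) (hab : a < b)
    (hzero : ∀ j : Fin m, a ≤ j → j < b → u j = false)
    (hub : u b = true)
    (hua : ustar a = true) (hubstar : ustar b = false)
    (hsame : ∀ j : Fin m, j ≠ a → j ≠ b → ustar j = u j) :
    ∀ p ∈ Set.Icc (0:ℝ) 1, RelC m ustar p ≤ RelC m u p :=
  rel_le_of_move_one_left_general m u ustar a b hab hzero hub hua hubstar hsame
end

section
/- Let m be a strictly positive integer and let ⪯ be the partial order on {0,1}^m generated by ≼_SH. Then the maximum length of a chain in ({0,1}^m, ⪯) equals binom(m+1,2) = m(m+1)/2; that is, every chain (totally ⪯-ordered subset) of {0,1}^m has at most m(m+1)/2 + 1 elements, and there exists a chain with exactly m(m+1)/2 + 1 elements. -/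
/-!
Along `≼_SH` the rank `ρ(u) = ∑_{i ∈ supp u} i` strictly increases: a strict inclusion of
supports adds positive terms, and under `≼_H` the sorted supports grow entrywise. Since `ρ`
takes values in `[0, m(m+1)/2]`, a chain has at most `m(m+1)/2 + 1` elements.
Conversely every `u ≠ 1` has an `≼_SH`-successor of rank `ρ(u) + 1`: if `j` is the first
zero of `u`, set it when `j = 1`, and otherwise move the one at `j - 1` to `j`. Climbing
from `0` in such steps yields a chain through all ranks.
-/

open Finset

section

variable {m : ℕ}

lemma mem_supp {u : Fin m → Bool} {i : Fin m} : i ∈ supp m u ↔ u i = true := by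
  simp [supp]

lemma supp_injective (m : ℕ) : Function.Injective (supp m) := by
  intro u v h
  funext i
  have hi := Finset.ext_iff.1 h i
  simp only [mem_supp] at hi
  exact Bool.eq_iff_iff.2 hi

def ofSupp (s : Finset (Fin m)) : Fin m → Bool := fun i => decide (i ∈ s)

@[simp]
lemma supp_ofSupp (s : Finset (Fin m)) : supp m (ofSupp s) = s := by
  ext i
  simp [mem_supp, ofSupp]

lemma sum_univ_fin_val_add_one (m : ℕ) : ∑ i : Fin m, ((i : ℕ) + 1) = m * (m + 1) / 2 := by
  rw [Fin.sum_univ_eq_sum_range (· + 1), ← Nat.add_zero (∑ i ∈ range m, (i + 1)),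
    ← sum_range_succ' (fun i => i), sum_range_id, Nat.add_sub_cancel, mul_comm]

lemma rho_le (u : Fin m → Bool) : rho m u ≤ m * (m + 1) / 2 :=
  sum_univ_fin_val_add_one m ▸ sum_le_sum_of_subset (subset_univ _)

lemma relH_iff {u v : Fin m → Bool} :
    relH m u v ↔ ∃ h : (supp m u).card = (supp m v).card,
      ∀ i, (supp m u).orderEmbOfFin rfl i ≤ (supp m v).orderEmbOfFin h.symm i := by
  simp only [relH, sortedSupp, orderEmbOfFin_apply, List.get_eq_getElem, length_sort]
  exact ⟨fun ⟨h, hle⟩ => ⟨h, fun i => hle i i.2 (h ▸ i.2)⟩,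
    fun ⟨h, hle⟩ => ⟨h, fun i hu _ => hle ⟨i, hu⟩⟩⟩

lemma rho_eq_sum_orderEmbOfFin (u : Fin m → Bool) {k : ℕ} (h : (supp m u).card = k) :
    rho m u = ∑ i : Fin k, (((supp m u).orderEmbOfFin h i : ℕ) + 1) := by
  rw [rho]
  nth_rw 1 [← map_orderEmbOfFin_univ (supp m u) h]
  rw [sum_map]
  rfl

lemma rho_lt_rho_of_relH {u v : Fin m → Bool} (h : relH m u v) (hne : u ≠ v) :
    rho m u < rho m v := by
  obtain ⟨hc, hle⟩ := relH_iff.1 h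
  rw [rho_eq_sum_orderEmbOfFin u rfl, rho_eq_sum_orderEmbOfFin v hc.symm]
  refine sum_lt_sum (fun i _ => Nat.add_le_add_right (hle i) 1) ?_
  by_contra! hge
  refine hne (supp_injective m ?_)
  rw [← image_orderEmbOfFin_univ (supp m u) rfl, ← image_orderEmbOfFin_univ (supp m v) hc.symm]
  congr 1
  funext i
  exact le_antisymm (hle i) (Fin.le_def.2 (by have := hge i (mem_univ _); omega))

lemma relH_of_strictMonoOn {u v : Fin m → Bool} (φ : Fin m → Fin m)
    (hmono : StrictMonoOn φ (supp m u)) (hle : ∀ i ∈ supp m u, i ≤ φ i)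
    (himage : (supp m u).image φ = supp m v) : relH m u v := by
  have hc : (supp m u).card = (supp m v).card := by
    rw [← himage, card_image_of_injOn hmono.injOn]
  have hφ : φ ∘ (supp m u).orderEmbOfFin rfl = (supp m v).orderEmbOfFin hc.symm :=
    orderEmbOfFin_unique hc.symm
      (fun i => himage ▸ mem_image_of_mem φ (orderEmbOfFin_mem _ _ i))
      (fun a b hab => hmono (orderEmbOfFin_mem _ _ a) (orderEmbOfFin_mem _ _ b)
        ((orderEmbOfFin _ _).strictMono hab))
  refine relH_iff.2 ⟨hc, fun i => ?_⟩
  rw [← hφ]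
  exact hle _ (orderEmbOfFin_mem _ _ i)

lemma relH_shift {u : Fin m → Bool} {x y : Fin m} (hx : x ∈ supp m u) (hy : y ∉ supp m u)
    (hxy : (y : ℕ) = x + 1) : relH m u (ofSupp (insert y ((supp m u).erase x))) := by
  have hne : ∀ z ∈ supp m u, z ≠ y := fun z hz h => hy (h ▸ hz)
  refine relH_of_strictMonoOn (fun i => if i = x then y else i) ?_ ?_ ?_
  · intro a _ b hb hab
    have hby := hne b hb
    rw [Fin.lt_def] at hab ⊢
    rw [Ne, Fin.ext_iff] at hby
    dsimp only
    split_ifs with h1 h2 h2 <;> rw [Fin.ext_iff] at h1 h2 <;> omega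
  · intro i _
    split_ifs with h
    · exact Fin.le_def.2 (by omega)
    · exact le_rfl
  · ext z
    simp only [mem_image, supp_ofSupp, mem_insert, mem_erase]
    constructor
    · rintro ⟨i, hi, rfl⟩
      split_ifs with h
      · exact Or.inl rfl
      · exact Or.inr ⟨h, hi⟩
    · rintro (rfl | ⟨hzx, hz⟩)
      · exact ⟨x, hx, if_pos rfl⟩
      · exact ⟨z, hz, if_neg hzx⟩

lemma rho_shift {u : Fin m → Bool} {x y : Fin m} (hx : x ∈ supp m u) (hy : y ∉ supp m u)
    (hxy : (y : ℕ) = x + 1) : rho m (ofSupp (insert y ((supp m u).erase x))) = rho m u + 1 := by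
  have hsum := add_sum_erase (supp m u) (fun i : Fin m => (i : ℕ) + 1) hx
  rw [rho, supp_ofSupp, sum_insert (fun h => hy (mem_of_mem_erase h)), rho, ← hsum]
  omega

lemma exists_relSH_rho_eq_succ (u : Fin m → Bool) (hu : supp m u ≠ univ) :
    ∃ v, relSH m u v ∧ rho m v = rho m u + 1 := by
  have hne : (supp m u)ᶜ.Nonempty := nonempty_iff_ne_empty.2 ((compl_eq_empty_iff _).not.2 hu)
  set y := (supp m u)ᶜ.min' hne
  have hy : y ∉ supp m u := mem_compl.1 (min'_mem _ hne)
  by_cases hy0 : (y : ℕ) = 0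
  · refine ⟨ofSupp (insert y (supp m u)), Or.inl ⟨?_, ?_⟩, ?_⟩
    · rw [supp_ofSupp, card_insert_of_notMem hy]
      omega
    · exact (supp_ofSupp _).symm ▸ subset_insert y _
    · rw [rho, rho, supp_ofSupp, sum_insert hy, hy0, add_comm]
  · let x : Fin m := ⟨y - 1, by omega⟩
    have hxy : (y : ℕ) = x + 1 := by simp only [x]; omega
    have hx : x ∈ supp m u := by
      by_contra hx
      have := min'_le _ x (mem_compl.2 hx)
      rw [Fin.le_def] at this
      omega
    exact ⟨_, Or.inr (relH_shift hx hy hxy), rho_shift hx hy hxy⟩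

lemma rho_lt_rho_of_relSH {u v : Fin m → Bool} (h : relSH m u v) (hne : u ≠ v) :
    rho m u < rho m v := by
  rcases h with ⟨hc, hsub⟩ | hH
  · obtain ⟨x, hxv, hxu⟩ := exists_of_ssubset (hsub.ssubset_of_ne fun h => hc (h ▸ rfl))
    exact sum_lt_sum_of_subset hsub hxv hxu (Nat.succ_pos _) fun _ _ _ => Nat.zero_le _
  · exact rho_lt_rho_of_relH hH hne

lemma rho_lt_rho_of_leSH {u v : Fin m → Bool} (h : leSH m u v) (hne : u ≠ v) :
    rho m u < rho m v := by
  induction h with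
  | refl => exact absurd rfl hne
  | @tail b c _ hbc ih =>
    by_cases hbc' : b = c
    · exact hbc' ▸ ih (hbc' ▸ hne)
    by_cases hub : u = b
    · exact hub ▸ rho_lt_rho_of_relSH hbc hbc'
    · exact (ih hub).trans (rho_lt_rho_of_relSH hbc hbc')

lemma rho_le_rho_of_leSH {u v : Fin m → Bool} (h : leSH m u v) : rho m u ≤ rho m v := by
  by_cases hne : u = v
  · exact hne ▸ le_rfl
  · exact (rho_lt_rho_of_leSH h hne).le

lemma chain_card_le (C : Finset (Fin m → Bool))
    (hC : ∀ u ∈ C, ∀ v ∈ C, leSH m u v ∨ leSH m v u) : C.card ≤ m * (m + 1) / 2 + 1 := by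
  have hinj : Set.InjOn (rho m) C := by
    intro u hu v hv huv
    by_contra hne
    rcases hC u hu v hv with h | h
    · exact (rho_lt_rho_of_leSH h hne).ne huv
    · exact (rho_lt_rho_of_leSH h (Ne.symm hne)).ne huv.symm
  calc C.card ≤ (range (m * (m + 1) / 2 + 1)).card :=
        card_le_card_of_injOn (rho m) (fun u _ => mem_range.2 (Nat.lt_succ_of_le (rho_le u))) hinj
    _ = m * (m + 1) / 2 + 1 := card_range _

lemma exists_chain_card_eq (k : ℕ) (hk : k ≤ m * (m + 1) / 2) :
    ∃ C : Finset (Fin m → Bool), (∀ u ∈ C, ∀ v ∈ C, leSH m u v ∨ leSH m v u) ∧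
      C.card = k + 1 ∧ ∃ u ∈ C, rho m u = k ∧ ∀ w ∈ C, leSH m w u := by
  induction k with
  | zero =>
    refine ⟨{ofSupp ∅}, ?_, card_singleton _, ofSupp ∅, mem_singleton_self _, ?_, ?_⟩
    · simp only [mem_singleton]
      rintro u rfl v rfl
      exact Or.inl .refl
    · rw [rho, supp_ofSupp, sum_empty]
    · intro w hw
      exact mem_singleton.1 hw ▸ .refl
  | succ k ih =>
    obtain ⟨C, hC, hcard, u, huC, hu, htop⟩ := ih (by omega)
    have hsupp : supp m u ≠ univ := fun h => by
      rw [rho, h, sum_univ_fin_val_add_one] at hu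
      omega
    obtain ⟨v, huv, hv⟩ := exists_relSH_rho_eq_succ u hsupp
    have hbelow : ∀ w ∈ C, leSH m w v := fun w hw => (htop w hw).tail huv
    have hvC : v ∉ C := fun hvC => by
      have := rho_le_rho_of_leSH (htop v hvC)
      omega
    refine ⟨insert v C, ?_, by rw [card_insert_of_notMem hvC, hcard], v, mem_insert_self _ _,
      by omega, ?_⟩
    · intro a ha b hb
      rw [mem_insert] at ha hb
      rcases ha with rfl | ha <;> rcases hb with rfl | hb
      · exact Or.inl .refl
      · exact Or.inr (hbelow b hb)
      · exact Or.inl (hbelow a ha)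
      · exact hC a ha b hb
    · intro w hw
      rcases mem_insert.1 hw with rfl | hw
      · exact .refl
      · exact hbelow w hw

end

theorem max_chain_length_general (m : ℕ) :
    (∀ C : Finset (Fin m → Bool),
      (∀ u ∈ C, ∀ v ∈ C, leSH m u v ∨ leSH m v u) →
      C.card ≤ m * (m + 1) / 2 + 1) ∧
    (∃ C : Finset (Fin m → Bool),
      (∀ u ∈ C, ∀ v ∈ C, leSH m u v ∨ leSH m v u) ∧
      C.card = m * (m + 1) / 2 + 1) := by
  obtain ⟨C, hC, hcard, -⟩ := exists_chain_card_eq (m := m) _ le_rfl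
  exact ⟨chain_card_le, C, hC, hcard⟩

/-- the maximum length of a chain in `({0,1}^m, ⪯)` equals
`binom(m+1,2) = m(m+1)/2`: every chain has at most `m(m+1)/2 + 1` elements,
and some chain has exactly `m(m+1)/2 + 1` elements. -/
theorem max_chain_length (m : ℕ) (hm : 0 < m) :
    (∀ C : Finset (Fin m → Bool),
      (∀ u ∈ C, ∀ v ∈ C, leSH m u v ∨ leSH m v u) →
      C.card ≤ m * (m + 1) / 2 + 1) ∧
    (∃ C : Finset (Fin m → Bool),
      (∀ u ∈ C, ∀ v ∈ C, leSH m u v ∨ leSH m v u) ∧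
      C.card = m * (m + 1) / 2 + 1) :=
  max_chain_length_general m
end

section
/- Let m be a strictly positive integer and p ∈ (0,1). If u ∈ {0,1}^m is not the all-zeros vector, then p^{2^m} < Rel(C^u; p); and if u is not the all-ones vector, then Rel(C^u; p) < 1 − (1−p)^{2^m}. -/
/-!
Both elementary maps send `(0,1)` into itself and are strictly increasing there, and on `(0,1)`
the series map lies strictly below the parallel one (`p² < p < 1 - (1-p)²`). Hence
`u ↦ Rel(C^u; p)` is strictly monotone for the componentwise order on `{0,1}^m`, and the two
bounds are its values at the all-zeros and the all-ones vector, the least and greatest elements.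
-/

open Set

section ElementaryMaps

variable {x : ℝ}

lemma g_false (x : ℝ) : g false x = x ^ 2 := rfl

lemma g_true (x : ℝ) : g true x = 1 - (1 - x) ^ 2 := rfl

lemma g_mem_Ioo (b : Bool) (hx : x ∈ Ioo (0 : ℝ) 1) : g b x ∈ Ioo (0 : ℝ) 1 := by
  obtain ⟨hx0, hx1⟩ := hx
  cases b
  · exact ⟨by rw [g_false]; positivity, by rw [g_false]; nlinarith⟩
  · exact ⟨by rw [g_true]; nlinarith, by rw [g_true]; nlinarith⟩

lemma g_strictMono_left (hx : x ∈ Ioo (0 : ℝ) 1) : StrictMono (fun b => g b x) := by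
  intro b b' hb
  obtain ⟨rfl, rfl⟩ := Bool.lt_iff.mp hb
  change g false x < g true x
  rw [g_false, g_true]
  nlinarith [hx.1, hx.2]

lemma g_strictMonoOn (b : Bool) : StrictMonoOn (g b) (Ioo (0 : ℝ) 1) := by
  intro x hx y hy hxy
  cases b
  · rw [g_false, g_false]; nlinarith [hx.1]
  · rw [g_true, g_true]; nlinarith [hy.2]

end ElementaryMaps

section Composition

variable {m : ℕ} {p : ℝ}

lemma RelC_zero (u : Fin 0 → Bool) (p : ℝ) : RelC 0 u p = p := rfl

lemma RelC_succ (u : Fin (m + 1) → Bool) (p : ℝ) :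
    RelC (m + 1) u p = g (u 0) (RelC m (Fin.tail u) p) := by
  simp [RelC, List.finRange_succ, List.foldr_map, Fin.tail]

lemma RelC_mem_Ioo (u : Fin m → Bool) (hp : p ∈ Ioo (0 : ℝ) 1) : RelC m u p ∈ Ioo (0 : ℝ) 1 := by
  induction m with
  | zero => exact hp
  | succ n ih => rw [RelC_succ]; exact g_mem_Ioo _ (ih _)

lemma RelC_strictMono (hp : p ∈ Ioo (0 : ℝ) 1) : StrictMono (fun u : Fin m → Bool => RelC m u p) := by
  induction m with
  | zero => intro u v huv; exact absurd (Subsingleton.elim u v) huv.ne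
  | succ n ih =>
    intro u v huv
    simp only [RelC_succ]
    have head_le : u 0 ≤ v 0 := huv.le 0
    have tail_le : Fin.tail u ≤ Fin.tail v := fun i => huv.le i.succ
    rcases tail_le.lt_or_eq with tail_lt | tail_eq
    · calc g (u 0) (RelC n (Fin.tail u) p)
          < g (u 0) (RelC n (Fin.tail v) p) :=
            g_strictMonoOn _ (RelC_mem_Ioo _ hp) (RelC_mem_Ioo _ hp) (ih tail_lt)
        _ ≤ g (v 0) (RelC n (Fin.tail v) p) :=
            (g_strictMono_left (RelC_mem_Ioo _ hp)).monotone head_le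
    · have head_lt : u 0 < v 0 := by
        refine head_le.lt_of_ne fun head_eq => huv.ne ?_
        rw [← Fin.cons_self_tail u, ← Fin.cons_self_tail v, head_eq, tail_eq]
      rw [tail_eq]
      exact g_strictMono_left (RelC_mem_Ioo _ hp) head_lt

lemma RelC_const_false (m : ℕ) (p : ℝ) : RelC m (fun _ => false) p = p ^ 2 ^ m := by
  induction m with
  | zero => simp [RelC_zero]
  | succ n ih => rw [RelC_succ, Fin.tail_def, ih, g_false, ← pow_mul, ← pow_succ]

lemma RelC_const_true (m : ℕ) (p : ℝ) : RelC m (fun _ => true) p = 1 - (1 - p) ^ 2 ^ m := by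
  induction m with
  | zero => simp [RelC_zero]
  | succ n ih => rw [RelC_succ, Fin.tail_def, ih, g_true, sub_sub_cancel, ← pow_mul, ← pow_succ]

end Composition

theorem strict_extremal_bounds_general (m : ℕ) (u : Fin m → Bool)
    (p : ℝ) (hp : p ∈ Set.Ioo (0:ℝ) 1) :
    ((u ≠ fun _ => false) → p ^ (2 ^ m) < RelC m u p) ∧
      ((u ≠ fun _ => true) → RelC m u p < 1 - (1 - p) ^ (2 ^ m)) := by
  refine ⟨fun hu => ?_, fun hu => ?_⟩
  · rw [← RelC_const_false]
    exact RelC_strictMono hp (lt_of_le_of_ne (fun i => Bool.false_le (u i)) (Ne.symm hu))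
  · rw [← RelC_const_true]
    exact RelC_strictMono hp (lt_of_le_of_ne (fun i => Bool.le_true (u i)) hu)

/-- strict versions of the extremal bounds, for `p ∈ (0,1)`:
if `u` is not all-zeros then `p^{2^m} < Rel(C^u;p)`, and if `u` is not all-ones
then `Rel(C^u;p) < 1 - (1-p)^{2^m}`. -/
theorem strict_extremal_bounds (m : ℕ) (hm : 0 < m) (u : Fin m → Bool)
    (p : ℝ) (hp : p ∈ Set.Ioo (0:ℝ) 1) :
    ((u ≠ fun _ => false) → p ^ (2 ^ m) < RelC m u p) ∧
      ((u ≠ fun _ => true) → RelC m u p < 1 - (1 - p) ^ (2 ^ m)) :=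
  strict_extremal_bounds_general m u p hp
end
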